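/- arXiv:2405.14727 — 4 statements merged into one kernel-verified Lean document; each statement's English description precedes it below -/
import Mathlib

section
/- Let A be a ring, t a central unit of A, I a type, and ε : I → I → ℤ a function with ε j i = −ε i j for all i, j ∈ I. Let Z : I → Aˣ be a family of units satisfying Z i · Z j = t^{2·ε i j} · Z j · Z i for all i, j ∈ I. For a finite list L = [(i₁,a₁),…,(iₙ,aₙ)] of pairs in I × ℤ define the normalized monomial W(L) := t^{−Σ_{1≤j<k≤n} a_j a_k ε(i_j,i_k)} · (Z i₁)^{a₁} ⋯ (Z iₙ)^{aₙ} ∈ Aˣ, and the weight wt(L) := Σ_{j=1}^{n} a_j · δ_{i_j} ∈ (I →₀ ℤ), where δ_i denotes the standard basis element at i. Then: (a) whenever two lists L, L′ satisfy wt(L) = wt(L′), one has W(L) = W(L′), so W induces a well-defined map v ↦ Z_v on the free ℤ-module I →₀ ℤ; and (b) for all lists L, L′, W(L)·W(L′) = t^{B(wt L, wt L′)} · W(L ++ L′), where B is the unique ℤ-bilinear form on I →₀ ℤ with B(δ_i, δ_j) = ε i j; consequently Z_v · Z_w = t^{B(v,w)} · Z_{v+w} for all v, w ∈ I →₀ ℤ.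 -/
/-- The exponent `Σ_{1 ≤ j < k ≤ n} a_j a_k ε(i_j, i_k)` attached to a list
`L = [(i₁,a₁),…,(iₙ,aₙ)]` of pairs in `I × ℤ`. -/
def pairSum {I : Type*} (ε : I → I → ℤ) : List (I × ℤ) → ℤ
  | [] => 0
  | p :: L => (L.map fun q => p.2 * q.2 * ε p.1 q.1).sum + pairSum ε L

/-- The weight `wt(L) = Σ_j a_j · δ_{i_j} ∈ (I →₀ ℤ)` of a list `L`. -/
noncomputable def wtList {I : Type*} : List (I × ℤ) → (I →₀ ℤ)
  | [] => 0
  | p :: L => Finsupp.single p.1 p.2 + wtList L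

/-- The normalized (Weyl-ordered) monomial
`W(L) = t^(−Σ_{j<k} a_j a_k ε(i_j,i_k)) · (Z i₁)^{a₁} ⋯ (Z iₙ)^{aₙ} ∈ Aˣ`. -/
def Wmon {I A : Type*} [Ring A] (t : Aˣ) (ε : I → I → ℤ) (Z : I → Aˣ)
    (L : List (I × ℤ)) : Aˣ :=
  t ^ (-(pairSum ε L)) * (L.map fun p => Z p.1 ^ p.2).prod

/-!
Expanding the definition gives `W((i, a) :: L) = t^(-B(a δᵢ, wt L)) · Zᵢ^a · W(L)`. With it one
checks that `W` is unchanged by swapping two adjacent entries (by skew-symmetry, the twisted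
commutation `Zᵢ^a Zⱼ^b = t^(2ab ε i j) Zⱼ^b Zᵢ^a` exactly compensates the change of normalisation),
by merging two adjacent entries with the same index (as `ε i i = 0`), and by dropping an entry
with exponent zero. So all entries of index `i` can be collected at the front into the single entry
`(i, wt(L) i)`. For `wt(L) = wt(L')`, doing this at an index occurring in `L` or `L'` leaves two
tails of equal weight and smaller total length, so induction shows `W(L) = W(L')`. The product
formula follows from the same expansion by induction on `L`.
-/

section TwistedCommutation

variable {G : Type*} [Group G] {c x y : G}

theorem mul_eq_inv_mul_mul_of_mul_eq (hc : ∀ g, Commute c g) (h : x * y = c * y * x) :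
    y * x = c⁻¹ * x * y := by
  rw [mul_assoc c⁻¹, h, mul_assoc, (hc _).inv_left.left_comm]
  group

theorem mul_zpow_eq_of_mul_eq (hc : ∀ g, Commute c g) (h : x * y = c * y * x) (n : ℤ) :
    x * y ^ n = c ^ n * y ^ n * x := by
  have hsemi : SemiconjBy x y (c * y) := h
  rw [← (hc y).mul_zpow]
  exact hsemi.zpow_right n

theorem zpow_mul_zpow_eq_of_mul_eq (hc : ∀ g, Commute c g) (h : x * y = c * y * x) (a b : ℤ) :
    x ^ a * y ^ b = c ^ (a * b) * y ^ b * x ^ a := by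
  have hcb : ∀ g, Commute (c ^ b)⁻¹ g := fun g => ((hc g).zpow_left b).inv_left
  have h₁ := mul_eq_inv_mul_mul_of_mul_eq (fun g => (hc g).zpow_left b)
    (mul_zpow_eq_of_mul_eq hc h b)
  have h₂ := mul_eq_inv_mul_mul_of_mul_eq (fun g => (hcb g).zpow_left a)
    (mul_zpow_eq_of_mul_eq hcb h₁ a)
  rwa [inv_zpow, inv_inv, ← zpow_mul, mul_comm b] at h₂

end TwistedCommutation

noncomputable def bilinFormOf {I : Type*} (ε : I → I → ℤ) : (I →₀ ℤ) →+ (I →₀ ℤ) →+ ℤ :=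
  Finsupp.liftAddHom fun i => zmultiplesHom _ (Finsupp.liftAddHom fun j => zmultiplesHom ℤ (ε i j))

@[simp]
theorem bilinFormOf_single_single {I : Type*} (ε : I → I → ℤ) (i j : I) (a b : ℤ) :
    bilinFormOf ε (Finsupp.single i a) (Finsupp.single j b) = a * b * ε i j := by
  simp [bilinFormOf, mul_assoc]

theorem eq_bilinFormOf {I : Type*} {ε : I → I → ℤ} {B : (I →₀ ℤ) → (I →₀ ℤ) → ℤ}
    (hBl : ∀ v₁ v₂ w, B (v₁ + v₂) w = B v₁ w + B v₂ w)
    (hBr : ∀ v w₁ w₂, B v (w₁ + w₂) = B v w₁ + B v w₂)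
    (hBε : ∀ i j, B (Finsupp.single i 1) (Finsupp.single j 1) = ε i j) (v w : I →₀ ℤ) :
    B v w = bilinFormOf ε v w := by
  let B' : (I →₀ ℤ) →+ (I →₀ ℤ) →+ ℤ :=
    AddMonoidHom.mk' (fun v => AddMonoidHom.mk' (B v) (hBr v))
      fun v₁ v₂ => AddMonoidHom.ext (hBl v₁ v₂)
  have : B' = bilinFormOf ε := by
    ext i j
    simpa [B'] using hBε i j
  exact DFunLike.congr_fun (DFunLike.congr_fun this v) w

theorem wtList_append {I : Type*} (L L' : List (I × ℤ)) :
    wtList (L ++ L') = wtList L + wtList L' := by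
  induction L with
  | nil => simp [wtList]
  | cons p L ih => simp [wtList, ih, add_assoc]

theorem wtList_gather {I : Type*} [DecidableEq I] (i : I) (L : List (I × ℤ)) :
    wtList ((i, wtList L i) :: L.filter (·.1 ≠ i)) = wtList L := by
  induction L with
  | nil => simp [wtList]
  | cons p L ih =>
    conv_rhs => rw [wtList, ← ih]
    by_cases hp : p.1 = i
    · simp [wtList, hp, Finsupp.single_add, add_assoc]
    · simp [wtList, hp, add_left_comm]

theorem sum_map_eq_bilinFormOf {I : Type*} (ε : I → I → ℤ) (p : I × ℤ) (L : List (I × ℤ)) :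
    (L.map fun q => p.2 * q.2 * ε p.1 q.1).sum
      = bilinFormOf ε (Finsupp.single p.1 p.2) (wtList L) := by
  induction L with
  | nil => simp [wtList]
  | cons q L ih => simp [wtList, ih]

section Wmon

variable {I A : Type*} [Ring A] {t : Aˣ} {ε : I → I → ℤ} {Z : I → Aˣ}

theorem Wmon_nil : Wmon t ε Z [] = 1 := by
  simp [Wmon, pairSum]

theorem Wmon_cons (ht : ∀ u : Aˣ, Commute t u) (p : I × ℤ) (L : List (I × ℤ)) :
    Wmon t ε Z (p :: L) = t ^ (-bilinFormOf ε (Finsupp.single p.1 p.2) (wtList L))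
      * (Z p.1 ^ p.2 * Wmon t ε Z L) := by
  simp only [Wmon]
  rw [pairSum, sum_map_eq_bilinFormOf, List.map_cons, List.prod_cons, neg_add, zpow_add, mul_assoc]
  exact congrArg (_ * ·) (((ht _).zpow_left _).left_comm _)

theorem Wmon_mul_Wmon (ht : ∀ u : Aˣ, Commute t u) (L L' : List (I × ℤ)) :
    Wmon t ε Z L * Wmon t ε Z L'
      = t ^ bilinFormOf ε (wtList L) (wtList L') * Wmon t ε Z (L ++ L') := by
  induction L with
  | nil => simp [Wmon_nil, wtList]
  | cons p L ih =>
    rw [List.cons_append, Wmon_cons ht, Wmon_cons ht, mul_assoc, mul_assoc, ih,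
      ← ((ht _).zpow_left _).left_comm, wtList_append]
    simp only [← mul_assoc, ← zpow_add]
    congr 3
    simp only [wtList, map_add, AddMonoidHom.add_apply]
    ring

theorem Wmon_cons_zero (ht : ∀ u : Aˣ, Commute t u) (i : I) (L : List (I × ℤ)) :
    Wmon t ε Z ((i, 0) :: L) = Wmon t ε Z L := by
  simp [Wmon_cons ht]

theorem Wmon_cons_cons_same (ht : ∀ u : Aˣ, Commute t u) (hε : ∀ i, ε i i = 0)
    (i : I) (a b : ℤ) (L : List (I × ℤ)) :
    Wmon t ε Z ((i, a) :: (i, b) :: L) = Wmon t ε Z ((i, a + b) :: L) := by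
  rw [Wmon_cons ht, Wmon_cons ht, Wmon_cons ht, ← ((ht _).zpow_left _).left_comm,
    ← mul_assoc (Z i ^ a), ← zpow_add, ← mul_assoc, ← zpow_add]
  congr 2
  simp only [wtList, Finsupp.single_add, map_add, AddMonoidHom.add_apply,
    bilinFormOf_single_single, hε]
  ring

theorem Wmon_cons_swap (ht : ∀ u : Aˣ, Commute t u) (hskew : ∀ i j, ε j i = -ε i j)
    (hZ : ∀ i j, Z i * Z j = t ^ (2 * ε i j) * Z j * Z i) (p q : I × ℤ) (L : List (I × ℤ)) :
    Wmon t ε Z (p :: q :: L) = Wmon t ε Z (q :: p :: L) := by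
  rw [Wmon_cons ht, Wmon_cons ht, Wmon_cons ht, Wmon_cons ht,
    ← ((ht (Z p.1 ^ p.2)).zpow_left _).left_comm, ← ((ht (Z q.1 ^ q.2)).zpow_left _).left_comm,
    ← mul_assoc (Z p.1 ^ p.2),
    zpow_mul_zpow_eq_of_mul_eq (fun u => (ht u).zpow_left _) (hZ p.1 q.1), ← zpow_mul]
  simp only [← mul_assoc, ← zpow_add]
  congr 4
  simp only [wtList, map_add, bilinFormOf_single_single, hskew p.1 q.1]
  ring

theorem Wmon_cons_congr (ht : ∀ u : Aˣ, Commute t u) (p : I × ℤ) {L L' : List (I × ℤ)}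
    (hwt : wtList L = wtList L') (hW : Wmon t ε Z L = Wmon t ε Z L') :
    Wmon t ε Z (p :: L) = Wmon t ε Z (p :: L') := by
  rw [Wmon_cons ht, Wmon_cons ht, hwt, hW]

theorem Wmon_gather [DecidableEq I] (ht : ∀ u : Aˣ, Commute t u) (hskew : ∀ i j, ε j i = -ε i j)
    (hZ : ∀ i j, Z i * Z j = t ^ (2 * ε i j) * Z j * Z i) (i : I) (L : List (I × ℤ)) :
    Wmon t ε Z L = Wmon t ε Z ((i, wtList L i) :: L.filter (·.1 ≠ i)) := by
  induction L with
  | nil => simp [wtList, Wmon_cons_zero ht]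
  | cons p L ih =>
    obtain ⟨j, a⟩ := p
    rw [Wmon_cons_congr ht (j, a) (wtList_gather i L).symm ih]
    by_cases hj : j = i
    · subst hj
      rw [Wmon_cons_cons_same ht (fun k => by linarith [hskew k k])]
      simp [wtList]
    · rw [Wmon_cons_swap ht hskew hZ]
      simp [wtList, hj]

theorem Wmon_eq_of_wtList_eq [DecidableEq I] (ht : ∀ u : Aˣ, Commute t u)
    (hskew : ∀ i j, ε j i = -ε i j) (hZ : ∀ i j, Z i * Z j = t ^ (2 * ε i j) * Z j * Z i)
    (L L' : List (I × ℤ)) (h : wtList L = wtList L') : Wmon t ε Z L = Wmon t ε Z L' := by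
  by_cases hnil : L ++ L' = []
  · obtain ⟨rfl, rfl⟩ := List.append_eq_nil_iff.1 hnil
    rfl
  obtain ⟨p, hp⟩ := List.exists_mem_of_ne_nil _ hnil
  have hfilter : wtList (L.filter (·.1 ≠ p.1)) = wtList (L'.filter (·.1 ≠ p.1)) := by
    have hL := wtList_gather p.1 L
    have hL' := wtList_gather p.1 L'
    rw [wtList, h] at hL
    rw [wtList] at hL'
    exact add_left_cancel (hL.trans hL'.symm)
  rw [Wmon_gather ht hskew hZ p.1 L, Wmon_gather ht hskew hZ p.1 L', h,
    Wmon_cons_congr ht _ hfilter (Wmon_eq_of_wtList_eq ht hskew hZ _ _ hfilter)]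
termination_by L.length + L'.length
decreasing_by
  rw [← List.length_append, ← List.length_append, ← List.filter_append]
  exact List.length_filter_lt_length_iff_exists.2 ⟨p, hp, by simp⟩

end Wmon

/-- If `Z i · Z j = t^(2 ε i j) · Z j · Z i` for a skew-symmetric `ε`, then
(a) `W(L)` depends only on the weight `wt(L)`, so `W` induces a well-defined map
`v ↦ Z_v` on `I →₀ ℤ`; and (b) `W(L)·W(L') = t^(B(wt L, wt L')) · W(L ++ L')`, where `B` is
the unique ℤ-bilinear form with `B(δ_i, δ_j) = ε i j`; since `wt (L ++ L') = wt L + wt L'`,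
consequently `Z_v · Z_w = t^(B(v,w)) · Z_(v+w)`. -/
theorem stmt2 {I : Type*} {A : Type*} [Ring A] (t : Aˣ)
    (ht : ∀ a : A, (t : A) * a = a * (t : A))
    (ε : I → I → ℤ) (hskew : ∀ i j : I, ε j i = - ε i j)
    (Z : I → Aˣ)
    (hZ : ∀ i j : I, (Z i : A) * (Z j : A)
      = ((t ^ (2 * ε i j) : Aˣ) : A) * (Z j : A) * (Z i : A))
    (B : (I →₀ ℤ) → (I →₀ ℤ) → ℤ)
    (hBadd_left : ∀ v₁ v₂ w, B (v₁ + v₂) w = B v₁ w + B v₂ w)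
    (hBadd_right : ∀ v w₁ w₂, B v (w₁ + w₂) = B v w₁ + B v w₂)
    (hBε : ∀ i j : I, B (Finsupp.single i 1) (Finsupp.single j 1) = ε i j) :
    (∀ L L' : List (I × ℤ), wtList L = wtList L' → Wmon t ε Z L = Wmon t ε Z L') ∧
    (∀ L L' : List (I × ℤ),
      Wmon t ε Z L * Wmon t ε Z L'
        = t ^ (B (wtList L) (wtList L')) * Wmon t ε Z (L ++ L')) ∧
    (∀ L L' : List (I × ℤ), wtList (L ++ L') = wtList L + wtList L') := by
  classical
  have htu : ∀ u : Aˣ, Commute t u := fun u => Units.ext (ht u)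
  have hZu : ∀ i j, Z i * Z j = t ^ (2 * ε i j) * Z j * Z i := fun i j => Units.ext (hZ i j)
  refine ⟨Wmon_eq_of_wtList_eq htu hskew hZu, fun L L' => ?_, wtList_append⟩
  rw [eq_bilinFormOf hBadd_left hBadd_right hBε]
  exact Wmon_mul_Wmon htu L L'
end

section
/- Fix an integer N ≥ 1 and k ∈ ZMod N, and suppose segment s_k is a left turn while every segment s_i with i ≠ k is a right turn (an almost-peripheral loop); thus a juncture-state J : ZMod N → Bool is admissible if and only if ¬(J k = false ∧ J(k+1) = true) and, for every i ≠ k, ¬(J i = true ∧ J(i+1) = false). For r = 0, 1, …, N define J_r : ZMod N → Bool by J_r x = false if and only if x lies in the set of images in ZMod N of the r consecutive values k+1, k+2, …, k+r (so J_0 is constantly true and J_N is constantly false). Then a juncture-state J is admissible if and only if J = J_r for some 0 ≤ r ≤ N; moreover J_0, …, J_N are pairwise distinct, so there are exactly N + 1 admissible juncture-states. -/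
/-- The juncture-state `J_r` of an almost-peripheral loop: `J_r x = false` iff `x` lies in
the set of images in `ZMod N` of the `r` consecutive values `k+1, k+2, …, k+r`. -/
def Jstate (N : ℕ) (k : ZMod N) (r : ℕ) (x : ZMod N) : Bool :=
  if x ∈ (Finset.Icc 1 r).image (fun j : ℕ => k + (j : ZMod N)) then false else true

lemma castInj (N a b : ℕ) (ha1 : 1 ≤ a) (haN : a ≤ N) (hb1 : 1 ≤ b) (hbN : b ≤ N)
    (h : (a : ZMod N) = (b : ZMod N)) : a = b := by
  rw [ZMod.natCast_eq_natCast_iff] at h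
  obtain ⟨c, hc⟩ := h.dvd
  have h1 : (b : ℤ) - (a : ℤ) < (N : ℤ) := by omega
  have h2 : -(N : ℤ) < (b : ℤ) - (a : ℤ) := by omega
  have hc0 : c = 0 := by
    rcases lt_trichotomy c 0 with h | h | h
    · nlinarith
    · exact h
    · nlinarith
  rw [hc0] at hc
  omega

lemma memB (N : ℕ) (k : ZMod N) (r j : ℕ) (hr : r ≤ N) (hj1 : 1 ≤ j) (hjN : j ≤ N) :
    Jstate N k r (k + (j : ZMod N)) = false ↔ j ≤ r := by
  unfold Jstate
  constructor
  · intro h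
    by_contra hjr
    rw [if_neg] at h
    · exact Bool.noConfusion h
    · simp only [Finset.mem_image, Finset.mem_Icc]
      rintro ⟨j', ⟨hj'1, hj'r⟩, hj'⟩
      have heq : (j' : ZMod N) = (j : ZMod N) := add_left_cancel hj'
      have := castInj N j' j hj'1 (le_trans hj'r hr) hj1 hjN heq
      omega
  · intro h
    rw [if_pos]
    simp only [Finset.mem_image, Finset.mem_Icc]
    exact ⟨j, ⟨hj1, h⟩, rfl⟩

lemma memBT (N : ℕ) (k : ZMod N) (r j : ℕ) (hr : r ≤ N) (hj1 : 1 ≤ j) (hjN : j ≤ N) :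
    Jstate N k r (k + (j : ZMod N)) = true ↔ r < j := by
  have h := memB N k r j hr hj1 hjN
  rcases Bool.eq_false_or_eq_true (Jstate N k r (k + (j : ZMod N))) with hb | hb <;>
    rw [hb] at h ⊢ <;> simp at h ⊢ <;> omega

lemma existsRep (N : ℕ) (hN : 1 ≤ N) (k : ZMod N) (x : ZMod N) :
    ∃ j : ℕ, 1 ≤ j ∧ j ≤ N ∧ x = k + (j : ZMod N) := by
  haveI : NeZero N := ⟨by omega⟩
  set v := (x - k).val with hv
  have hvN : v < N := ZMod.val_lt _
  have hcast : ((v : ℕ) : ZMod N) = x - k := ZMod.natCast_rightInverse _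
  by_cases h0 : v = 0
  · refine ⟨N, hN, le_refl N, ?_⟩
    have hxk : x - k = 0 := by rw [← hcast, h0]; simp
    have hx : x = k := by linear_combination hxk
    simp [hx, ZMod.natCast_self]
  · exact ⟨v, by omega, by omega, by rw [hcast]; ring⟩

/-- For an almost-peripheral loop (segment `s_k` a left turn, all other
segments right turns), a juncture-state `J : ZMod N → Bool` is admissible iff `J = J_r`
for some `0 ≤ r ≤ N`; moreover `J_0, …, J_N` are pairwise distinct, so there are exactly
`N + 1` admissible juncture-states. -/
theorem stmt5 (N : ℕ) (hN : 1 ≤ N) (k : ZMod N) :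
    (∀ J : ZMod N → Bool,
      ((¬(J k = false ∧ J (k + 1) = true)) ∧
        ∀ i : ZMod N, i ≠ k → ¬(J i = true ∧ J (i + 1) = false))
      ↔ ∃ r : ℕ, r ≤ N ∧ J = Jstate N k r) ∧
    (∀ r s : ℕ, r ≤ N → s ≤ N → Jstate N k r = Jstate N k s → r = s) := by
  haveI : NeZero N := ⟨by omega⟩
  have hk1 : k + 1 = k + ((1 : ℕ) : ZMod N) := by push_cast; ring
  have hkN : k = k + ((N : ℕ) : ZMod N) := by simp [ZMod.natCast_self]
  constructor
  · intro J
    constructor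
    · rintro ⟨hL, hR⟩
      have prop : ∀ j : ℕ, 1 ≤ j → J (k + (j : ZMod N)) = true →
          ∀ j', j ≤ j' → j' ≤ N → J (k + (j' : ZMod N)) = true := by
        intro j hj1 hjt j' hjj' hj'N
        induction j' with
        | zero => omega
        | succ m ih =>
          rcases Nat.lt_or_ge j (m+1) with hlt | hge
          · have hm1 : 1 ≤ m := by omega
            have hmN : m < N := by omega
            have hmt : J (k + (m : ZMod N)) = true := ih (by omega) (by omega)
            have hne : k + (m : ZMod N) ≠ k := by
              intro h
              have hz : (m : ZMod N) = 0 := by linear_combination h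
              have := congrArg ZMod.val hz
              rw [ZMod.val_cast_of_lt hmN, ZMod.val_zero] at this
              omega
            have hRi := hR (k + (m : ZMod N)) hne
            have hcast : k + (m : ZMod N) + 1 = k + ((m + 1 : ℕ) : ZMod N) := by
              push_cast; ring
            rcases Bool.eq_false_or_eq_true (J (k + ((m+1 : ℕ) : ZMod N))) with h | h
            · exact h
            · exact absurd ⟨hmt, by rw [hcast] at hRi ⊢; exact h⟩ hRi
          · have : j = m + 1 := by omega
            subst this; exact hjt
      by_cases hex : ∃ m : ℕ, (1 ≤ m ∧ m ≤ N ∧ J (k + (m : ZMod N)) = true)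
      · set m := Nat.find hex with hm
        obtain ⟨hm1, hmN, hmt⟩ := Nat.find_spec hex
        refine ⟨m - 1, by omega, ?_⟩
        funext x
        obtain ⟨j, hj1, hjN, rfl⟩ := existsRep N hN k x
        rcases Nat.lt_or_ge j m with hlt | hge
        · have hjf : J (k + (j : ZMod N)) = false := by
            have := Nat.find_min hex hlt
            rcases Bool.eq_false_or_eq_true (J (k + (j : ZMod N))) with h | h
            · exact absurd ⟨hj1, hjN, h⟩ this
            · exact h
          rw [hjf, eq_comm, memB N k (m-1) j (by omega) hj1 hjN]
          omega
        · have hjt : J (k + (j : ZMod N)) = true := prop m hm1 hmt j hge hjN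
          rw [hjt, eq_comm, memBT N k (m-1) j (by omega) hj1 hjN]
          omega
      · refine ⟨N, le_refl N, ?_⟩
        push_neg at hex
        funext x
        obtain ⟨j, hj1, hjN, rfl⟩ := existsRep N hN k x
        have h1 : J (k + (j : ZMod N)) = false := by
          rcases Bool.eq_false_or_eq_true (J (k + (j : ZMod N))) with h | h
          · exact absurd h (by simpa using hex j hj1 hjN)
          · exact h
        rw [h1, eq_comm, memB N k N j (le_refl N) hj1 hjN]
        exact hjN
    · rintro ⟨r, hr, rfl⟩
      constructor
      · rintro ⟨h1, h2⟩
        have hB1 := memB N k r N hr hN (le_refl N)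
        rw [← hkN] at hB1
        have hB2 := memBT N k r 1 hr (le_refl 1) hN
        rw [← hk1] at hB2
        have := hB1.mp h1
        have := hB2.mp h2
        omega
      · rintro i hik ⟨h1, h2⟩
        obtain ⟨j, hj1, hjN, rfl⟩ := existsRep N hN k i
        have hjlt : j < N := by
          rcases Nat.lt_or_ge j N with h | h
          · exact h
          · exfalso; apply hik
            have : j = N := by omega
            subst this
            simp [ZMod.natCast_self]
        rw [memBT N k r j hr hj1 hjN] at h1
        have hcast : k + (j : ZMod N) + 1 = k + ((j + 1 : ℕ) : ZMod N) := by push_cast; ring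
        rw [hcast, memB N k r (j+1) hr (by omega) (by omega)] at h2
        omega
  · have key : ∀ r s : ℕ, r < s → s ≤ N → Jstate N k r ≠ Jstate N k s := by
      intro r s hrs hsN h
      have h1 := memB N k s s hsN (by omega) hsN
      have h2 := memBT N k r s (by omega) (by omega) hsN
      rw [← h] at h1
      rw [h1.mpr (le_refl s)] at h2
      simp at h2
      omega
    intro r s hr hs h
    rcases lt_trichotomy r s with hlt | heq | hgt
    · exact absurd h (key r s hlt hs)
    · exact heq
    · exact absurd h.symm (key s r hgt hr)
end

section
/- Let N = ℤ⁴ with basis e_a, e_b, e_c, e_d and the unique skew-symmetric ℤ-bilinear form ⟨·,·⟩ determined by ⟨e_a,e_b⟩ = −2, ⟨e_a,e_c⟩ = 1, ⟨e_a,e_d⟩ = 1, ⟨e_b,e_c⟩ = −1, ⟨e_b,e_d⟩ = −1, ⟨e_c,e_d⟩ = −1. Set v_γ := 2(e_a+e_b+e_c+e_d), v₁ := e_a+e_b+2e_d, v₂ := −e_a−e_b−2e_c, and let u₀, …, u₈ be the nine vectors v_γ, 2e_a+2e_b+2e_d, 2e_b+2e_d, 2e_d, −2e_c+2e_d, −2e_c,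 −2e_a−2e_c, −2e_a−2e_b−2e_c, −v_γ. Then: (i) v₁ − v₂ = v_γ and ⟨v₁, v₂⟩ = −4; (ii) ⟨v₁, e_a⟩ = ⟨v₁, e_b⟩ = ⟨v₂, e_a⟩ = ⟨v₂, e_b⟩ = 0; and (iii) in every quantum torus realization (A, t, Z) of (N, ⟨·,·⟩), writing f_η := Z(e_a+e_b) + Z(−e_a+e_b) + Z(−e_a−e_b), the Teschner recursion relation Σ_{r=0}^{8} Z(u_r) = Z(v_γ) + Z(−v_γ) + Z(v₁+v₂) + Z(v₁)·f_η + Z(v₂)·f_η holds, and both Z(v₁) and Z(v₂) commute with f_η. -/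
/-- On `N = ℤ⁴` (modelled as `Fin 4 → ℤ`) with basis `e_a, e_b, e_c, e_d`
and the unique skew-symmetric ℤ-bilinear form with `⟨e_a,e_b⟩ = −2`, `⟨e_a,e_c⟩ = 1`,
`⟨e_a,e_d⟩ = 1`, `⟨e_b,e_c⟩ = −1`, `⟨e_b,e_d⟩ = −1`, `⟨e_c,e_d⟩ = −1`, setting
`v_γ = 2(e_a+e_b+e_c+e_d)`, `v₁ = e_a+e_b+2e_d`, `v₂ = −e_a−e_b−2e_c` and letting
`u₀,…,u₈` be the nine listed vectors, one has (i) `v₁ − v₂ = v_γ` and `⟨v₁,v₂⟩ = −4`;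
(ii) `⟨v₁,e_a⟩ = ⟨v₁,e_b⟩ = ⟨v₂,e_a⟩ = ⟨v₂,e_b⟩ = 0`; (iii) in every quantum torus
realization, with `f_η = Z(e_a+e_b) + Z(−e_a+e_b) + Z(−e_a−e_b)`, the Teschner recursion
`Σ_r Z(u_r) = Z(v_γ) + Z(−v_γ) + Z(v₁+v₂) + Z(v₁)·f_η + Z(v₂)·f_η` holds and `Z(v₁)`,
`Z(v₂)` commute with `f_η`. -/
theorem stmt7
    (B : (Fin 4 → ℤ) → (Fin 4 → ℤ) → ℤ)
    (hBadd_left : ∀ v₁ v₂ w, B (v₁ + v₂) w = B v₁ w + B v₂ w)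
    (hBadd_right : ∀ v w₁ w₂, B v (w₁ + w₂) = B v w₁ + B v w₂)
    (hBskew : ∀ v w, B v w = - B w v)
    (ea eb ec ed : Fin 4 → ℤ)
    (hea : ea = Pi.single 0 1) (heb : eb = Pi.single 1 1)
    (hec : ec = Pi.single 2 1) (hed : ed = Pi.single 3 1)
    (hab : B ea eb = -2) (hac : B ea ec = 1) (had : B ea ed = 1)
    (hbc : B eb ec = -1) (hbd : B eb ed = -1) (hcd : B ec ed = -1)
    {A : Type*} [Ring A] (t : Aˣ)
    (ht : ∀ a : A, (t : A) * a = a * (t : A))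
    (Z : (Fin 4 → ℤ) → Aˣ)
    (hZ : ∀ v w, (Z v : A) * (Z w : A) = ((t ^ B v w : Aˣ) : A) * (Z (v + w) : A))
    (vγ v₁ v₂ : Fin 4 → ℤ)
    (hvγ : vγ = 2 • (ea + eb + ec + ed))
    (hv₁ : v₁ = ea + eb + 2 • ed)
    (hv₂ : v₂ = -ea - eb - 2 • ec)
    (u : Fin 9 → (Fin 4 → ℤ))
    (hu : u = ![vγ, 2 • ea + 2 • eb + 2 • ed, 2 • eb + 2 • ed, 2 • ed,
      -(2 • ec) + 2 • ed, -(2 • ec), -(2 • ea) - 2 • ec,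
      -(2 • ea) - 2 • eb - 2 • ec, -vγ])
    (fη : A)
    (hfη : fη = (Z (ea + eb) : A) + (Z (-ea + eb) : A) + (Z (-ea - eb) : A)) :
    (v₁ - v₂ = vγ ∧ B v₁ v₂ = -4) ∧
    (B v₁ ea = 0 ∧ B v₁ eb = 0 ∧ B v₂ ea = 0 ∧ B v₂ eb = 0) ∧
    ((∑ r : Fin 9, (Z (u r) : A))
        = (Z vγ : A) + (Z (-vγ) : A) + (Z (v₁ + v₂) : A)
          + (Z v₁ : A) * fη + (Z v₂ : A) * fη) ∧
    ((Z v₁ : A) * fη = fη * (Z v₁ : A) ∧ (Z v₂ : A) * fη = fη * (Z v₂ : A)) := by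
  have hB0l : ∀ w, B 0 w = 0 := by
    intro w; have h := hBadd_left 0 0 w; simp only [add_zero] at h; linarith
  have hBnl : ∀ v w, B (-v) w = - B v w := by
    intro v w; have h := hBadd_left v (-v) w
    simp only [add_neg_cancel, hB0l] at h; linarith
  have hBnr : ∀ v w, B v (-w) = - B v w := by
    intro v w; rw [hBskew, hBnl, hBskew w v]; ring
  have hself : ∀ v, B v v = 0 := by intro v; have := hBskew v v; linarith
  have hba : B eb ea = 2 := by rw [hBskew, hab]; try norm_num
  have hca : B ec ea = -1 := by rw [hBskew, hac]; try norm_num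
  have hda : B ed ea = -1 := by rw [hBskew, had]; try norm_num
  have hcb : B ec eb = 1 := by rw [hBskew, hbc]; try norm_num
  have hdb : B ed eb = 1 := by rw [hBskew, hbd]; try norm_num
  have hdc : B ed ec = 1 := by rw [hBskew, hcd]; try norm_num
  have h1a : B v₁ ea = 0 := by
    simp [hv₁, two_smul, hBadd_left, hself, hba, hda]
  have h1b : B v₁ eb = 0 := by
    simp [hv₁, two_smul, hBadd_left, hself, hab, hdb]
  have h2a : B v₂ ea = 0 := by
    simp [hv₂, sub_eq_add_neg, two_smul, neg_add, hBadd_left, hBnl, hself, hba, hca]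
  have h2b : B v₂ eb = 0 := by
    simp [hv₂, sub_eq_add_neg, two_smul, neg_add, hBadd_left, hBnl, hself, hab, hcb]
  have h1c : B v₁ ec = 2 := by
    simp [hv₁, two_smul, hBadd_left, hac, hbc, hdc]
  have h12 : B v₁ v₂ = -4 := by
    simp [hv₂, sub_eq_add_neg, two_smul, neg_add, hBadd_right, hBnr,
      h1a, h1b, h1c]
  have key : ∀ v w, B v w = 0 → (Z v : A) * (Z w : A) = (Z (v + w) : A) := by
    intro v w h; rw [hZ, h]; simp
  have c1ab : B v₁ (ea + eb) = 0 := by rw [hBadd_right, h1a, h1b]; ring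
  have c1ab' : B v₁ (-ea + eb) = 0 := by rw [hBadd_right, hBnr, h1a, h1b]; ring
  have c1ab'' : B v₁ (-ea - eb) = 0 := by
    rw [sub_eq_add_neg, hBadd_right, hBnr, hBnr, h1a, h1b]; ring
  have c2ab : B v₂ (ea + eb) = 0 := by rw [hBadd_right, h2a, h2b]; ring
  have c2ab' : B v₂ (-ea + eb) = 0 := by rw [hBadd_right, hBnr, h2a, h2b]; ring
  have c2ab'' : B v₂ (-ea - eb) = 0 := by
    rw [sub_eq_add_neg, hBadd_right, hBnr, hBnr, h2a, h2b]; ring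
  have e1 : v₁ + (ea + eb) = 2 • ea + 2 • eb + 2 • ed := by rw [hv₁]; abel
  have e2 : v₁ + (-ea + eb) = 2 • eb + 2 • ed := by rw [hv₁]; abel
  have e3 : v₁ + (-ea - eb) = 2 • ed := by rw [hv₁]; abel
  have e4 : v₂ + (ea + eb) = -(2 • ec) := by rw [hv₂]; abel
  have e5 : v₂ + (-ea + eb) = -(2 • ea) - 2 • ec := by rw [hv₂]; abel
  have e6 : v₂ + (-ea - eb) = -(2 • ea) - 2 • eb - 2 • ec := by rw [hv₂]; abel
  have e7 : v₁ + v₂ = -(2 • ec) + 2 • ed := by rw [hv₁, hv₂]; abel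
  refine ⟨⟨by rw [hv₁, hv₂, hvγ]; abel, h12⟩, ⟨h1a, h1b, h2a, h2b⟩, ?_, ?_, ?_⟩
  · have L : (∑ r : Fin 9, (Z (u r) : A)) =
        (Z vγ : A) + (Z (2 • ea + 2 • eb + 2 • ed) : A) + (Z (2 • eb + 2 • ed) : A)
        + (Z (2 • ed) : A) + (Z (-(2 • ec) + 2 • ed) : A) + (Z (-(2 • ec)) : A)
        + (Z (-(2 • ea) - 2 • ec) : A) + (Z (-(2 • ea) - 2 • eb - 2 • ec) : A)
        + (Z (-vγ) : A) := by
      rw [hu]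
      simp [Fin.sum_univ_succ]
      abel
    rw [L, hfη]
    rw [mul_add, mul_add, mul_add, mul_add]
    rw [key _ _ c1ab, key _ _ c1ab', key _ _ c1ab'',
        key _ _ c2ab, key _ _ c2ab', key _ _ c2ab'']
    rw [e1, e2, e3, e4, e5, e6, e7]
    abel
  · rw [hfη, mul_add, mul_add, add_mul, add_mul]
    rw [key _ _ c1ab, key _ _ c1ab', key _ _ c1ab'']
    rw [key _ _ (by rw [hBskew, c1ab]; ring),
        key _ _ (by rw [hBskew, c1ab']; ring),
        key _ _ (by rw [hBskew, c1ab'']; ring)]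
    rw [add_comm v₁ (ea + eb), add_comm v₁ (-ea + eb), add_comm v₁ (-ea - eb)]
  · rw [hfη, mul_add, mul_add, add_mul, add_mul]
    rw [key _ _ c2ab, key _ _ c2ab', key _ _ c2ab'']
    rw [key _ _ (by rw [hBskew, c2ab]; ring),
        key _ _ (by rw [hBskew, c2ab']; ring),
        key _ _ (by rw [hBskew, c2ab'']; ring)]
    rw [add_comm v₂ (ea + eb), add_comm v₂ (-ea + eb), add_comm v₂ (-ea - eb)]
end

section
/- With M, F, (e_i), ⟨·,·⟩ and v_γ as in the context, set v₁ := −e_a − e_b − 2e_c and v₂ := v₁ + v_γ. Then: ⟨e_a, v_γ⟩ = 0 and ⟨e_b, v_γ⟩ = 0; ⟨e_a, v₁⟩ = ⟨e_b, v₁⟩ = ⟨e_a, v₂⟩ = ⟨e_b, v₂⟩ = 0; v₂ − v₁ = v_γ; and ⟨v₁, v₂⟩ = 4. -/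
/-! Skew-symmetry and additivity in the second argument reduce every bracket to the prescribed
values `⟨e_x, e_i⟩`. Against `v_γ` one needs `Σ_{i∈F} ⟨e_x, e_i⟩`, which for `x = a, b, c` has
only three nonzero terms, summing to `0, 0, −1`; then
`⟨v₁, v₂⟩ = ⟨v₁, v_γ⟩ = ⟨e_a + e_b + 2e_c, v_γ⟩ = 4`. -/

section RightAdditive

variable {M : Type*} [AddCommGroup M] {B : M → M → ℤ}

theorem apply_sum_right (hB : ∀ v w₁ w₂, B v (w₁ + w₂) = B v w₁ + B v w₂) (v : M)
    {ι : Type*} (s : Finset ι) (f : ι → M) :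
    B v (∑ i ∈ s, f i) = ∑ i ∈ s, B v (f i) :=
  map_sum (AddMonoidHom.mk' (B v) (hB v)) f s

theorem apply_zsmul_right (hB : ∀ v w₁ w₂, B v (w₁ + w₂) = B v w₁ + B v w₂) (v : M)
    (n : ℤ) (w : M) : B v (n • w) = n * B v w :=
  map_zsmul (AddMonoidHom.mk' (B v) (hB v)) n w

theorem apply_sub_right (hB : ∀ v w₁ w₂, B v (w₁ + w₂) = B v w₁ + B v w₂) (v w₁ w₂ : M) :
    B v (w₁ - w₂) = B v w₁ - B v w₂ :=
  map_sub (AddMonoidHom.mk' (B v) (hB v)) w₁ w₂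

theorem apply_neg_right (hB : ∀ v w₁ w₂, B v (w₁ + w₂) = B v w₁ + B v w₂) (v w : M) :
    B v (-w) = -B v w :=
  map_neg (AddMonoidHom.mk' (B v) (hB v)) w

end RightAdditive

theorem apply_self_eq_zero_of_skew {M : Type*} {B : M → M → ℤ}
    (hB : ∀ v w, B v w = -B w v) (v : M) : B v v = 0 := by
  linarith [hB v v]

theorem Finset.sum_eq_add_add_of_eq_zero_of_ne {ι : Type*} [DecidableEq ι] {F : Finset ι}
    {f : ι → ℤ} {x y z : ι} (hxy : x ≠ y) (hxz : x ≠ z) (hyz : y ≠ z)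
    (hx : x ∈ F) (hy : y ∈ F) (hz : z ∈ F)
    (hf : ∀ i ∈ F, i ≠ x → i ≠ y → i ≠ z → f i = 0) :
    ∑ i ∈ F, f i = f x + f y + f z := by
  have hsub : {x, y, z} ⊆ F := by
    simp only [Finset.insert_subset_iff, Finset.singleton_subset_iff]
    exact ⟨hx, hy, hz⟩
  rw [← Finset.sum_subset hsub fun i hi hni => by
    simp only [Finset.mem_insert, Finset.mem_singleton, not_or] at hni
    exact hf i hi hni.1 hni.2.1 hni.2.2]
  rw [Finset.sum_insert (by simp [hxy, hxz]), Finset.sum_pair hyz, add_assoc]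

theorem stmt10_general {I : Type*} (a b c c' d : I)
    (hab : a ≠ b) (hac : a ≠ c) (hac' : a ≠ c') (had : a ≠ d)
    (hbc : b ≠ c) (hbc' : b ≠ c') (hbd : b ≠ d)
    (hcd : c ≠ d)
    (F : Finset I) (haF : a ∈ F) (hbF : b ∈ F) (hcF : c ∈ F) (hc'F : c' ∈ F) (hdF : d ∈ F)
    (e : I → (I →₀ ℤ))
    (B : (I →₀ ℤ) → (I →₀ ℤ) → ℤ)
    (hBadd_right : ∀ v w₁ w₂, B v (w₁ + w₂) = B v w₁ + B v w₂)
    (hBskew : ∀ v w, B v w = - B w v)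
    (hBab : B (e a) (e b) = -2) (hBac : B (e a) (e c) = 1) (hBad : B (e a) (e d) = 1)
    (hBa0 : ∀ i : I, i ≠ b → i ≠ c → i ≠ d → B (e a) (e i) = 0)
    (hBbc : B (e b) (e c) = -1) (hBbd : B (e b) (e d) = -1)
    (hBb0 : ∀ i : I, i ≠ a → i ≠ c → i ≠ d → B (e b) (e i) = 0)
    (hBcc' : B (e c) (e c') = -1)
    (hBc0 : ∀ i ∈ F, i ≠ a → i ≠ b → i ≠ c' → B (e c) (e i) = 0)
    (vγ v₁ v₂ : I →₀ ℤ)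
    (hvγ : vγ = (2 : ℤ) • ∑ i ∈ F, e i)
    (hv₁ : v₁ = -(e a) - e b - (2 : ℤ) • e c)
    (hv₂ : v₂ = v₁ + vγ) :
    (B (e a) vγ = 0 ∧ B (e b) vγ = 0) ∧
    (B (e a) v₁ = 0 ∧ B (e b) v₁ = 0 ∧ B (e a) v₂ = 0 ∧ B (e b) v₂ = 0) ∧
    v₂ - v₁ = vγ ∧
    B v₁ v₂ = 4 := by
  classical
  have hBself := apply_self_eq_zero_of_skew hBskew
  have hBvγ (w) : B w vγ = 2 * ∑ i ∈ F, B w (e i) := by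
    rw [hvγ, apply_zsmul_right hBadd_right, apply_sum_right hBadd_right]
  have hBv₁ (w) : B w v₁ = -B w (e a) - B w (e b) - 2 * B w (e c) := by
    rw [hv₁, apply_sub_right hBadd_right, apply_sub_right hBadd_right,
      apply_neg_right hBadd_right, apply_zsmul_right hBadd_right]
  have haγ : B (e a) vγ = 0 := by
    rw [hBvγ, Finset.sum_eq_add_add_of_eq_zero_of_ne hbc hbd hcd hbF hcF hdF fun i _ => hBa0 i,
      hBab, hBac, hBad]; rfl
  have hbγ : B (e b) vγ = 0 := by
    rw [hBvγ, Finset.sum_eq_add_add_of_eq_zero_of_ne hac had hcd haF hcF hdF fun i _ => hBb0 i,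
      hBskew, hBab, hBbc, hBbd]; rfl
  have hcγ : B (e c) vγ = -2 := by
    rw [hBvγ, Finset.sum_eq_add_add_of_eq_zero_of_ne hab hac' hbc' haF hbF hc'F hBc0,
      hBskew, hBac, hBskew (e c), hBbc, hBcc']; rfl
  have hav₁ : B (e a) v₁ = 0 := by
    rw [hBv₁, hBself, hBab, hBac]; rfl
  have hbv₁ : B (e b) v₁ = 0 := by
    rw [hBv₁, hBself, hBskew, hBab, hBbc]; rfl
  refine ⟨⟨haγ, hbγ⟩, ⟨hav₁, hbv₁, ?_, ?_⟩, by rw [hv₂, add_sub_cancel_left], ?_⟩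
  · rw [hv₂, hBadd_right, hav₁, haγ]; rfl
  · rw [hv₂, hBadd_right, hbv₁, hbγ]; rfl
  · rw [hv₂, hBadd_right, hBself, hBskew, hBv₁, hBskew vγ, hBskew vγ, hBskew vγ, haγ, hbγ, hcγ]
    rfl

/-- With the exchange-matrix data of the ideal triangulation `Δ′` of a
minimal-marked one-holed surface of genus `g ≥ 2` (arcs `a, b, c, c′, d` of the first
handle, `F` the set of internal arcs), `v_γ := 2·Σ_{i∈F} e_i`, `v₁ := −e_a − e_b − 2e_c`,
`v₂ := v₁ + v_γ`, one has `⟨e_a,v_γ⟩ = ⟨e_b,v_γ⟩ = 0`,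
`⟨e_a,v₁⟩ = ⟨e_b,v₁⟩ = ⟨e_a,v₂⟩ = ⟨e_b,v₂⟩ = 0`, `v₂ − v₁ = v_γ`, and `⟨v₁,v₂⟩ = 4`. -/
theorem stmt10 {I : Type*} (a b c c' d : I)
    (hab : a ≠ b) (hac : a ≠ c) (hac' : a ≠ c') (had : a ≠ d)
    (hbc : b ≠ c) (hbc' : b ≠ c') (hbd : b ≠ d)
    (hcc' : c ≠ c') (hcd : c ≠ d) (hc'd : c' ≠ d)
    (F : Finset I) (haF : a ∈ F) (hbF : b ∈ F) (hcF : c ∈ F) (hc'F : c' ∈ F) (hdF : d ∈ F)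
    (e : I → (I →₀ ℤ)) (he : ∀ i : I, e i = Finsupp.single i 1)
    (B : (I →₀ ℤ) → (I →₀ ℤ) → ℤ)
    (hBadd_left : ∀ v₁ v₂ w, B (v₁ + v₂) w = B v₁ w + B v₂ w)
    (hBadd_right : ∀ v w₁ w₂, B v (w₁ + w₂) = B v w₁ + B v w₂)
    (hBskew : ∀ v w, B v w = - B w v)
    (hBab : B (e a) (e b) = -2) (hBac : B (e a) (e c) = 1) (hBad : B (e a) (e d) = 1)
    (hBa0 : ∀ i : I, i ≠ b → i ≠ c → i ≠ d → B (e a) (e i) = 0)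
    (hBbc : B (e b) (e c) = -1) (hBbd : B (e b) (e d) = -1)
    (hBb0 : ∀ i : I, i ≠ a → i ≠ c → i ≠ d → B (e b) (e i) = 0)
    (hBcc' : B (e c) (e c') = -1)
    (hBc0 : ∀ i ∈ F, i ≠ a → i ≠ b → i ≠ c' → B (e c) (e i) = 0)
    (vγ v₁ v₂ : I →₀ ℤ)
    (hvγ : vγ = (2 : ℤ) • ∑ i ∈ F, e i)
    (hv₁ : v₁ = -(e a) - e b - (2 : ℤ) • e c)
    (hv₂ : v₂ = v₁ + vγ) :
    (B (e a) vγ = 0 ∧ B (e b) vγ = 0) ∧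
    (B (e a) v₁ = 0 ∧ B (e b) v₁ = 0 ∧ B (e a) v₂ = 0 ∧ B (e b) v₂ = 0) ∧
    v₂ - v₁ = vγ ∧
    B v₁ v₂ = 4 :=
  stmt10_general a b c c' d hab hac hac' had hbc hbc' hbd hcd F haF hbF hcF hc'F hdF e B hBadd_right
    hBskew hBab hBac hBad hBa0 hBbc hBbd hBb0 hBcc' hBc0 vγ v₁ v₂ hvγ hv₁ hv₂
end
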